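/- arXiv:1506.04541 — 6 statements merged into one kernel-verified Lean document; each statement's English description precedes it below -/
import Mathlib

section
/- For real costs p_J, p_I with 0 ≤ p_J and p_J < p_I/2, and natural numbers n_S (secure edges) and n_Sc (insecure edges) with n_Sc > n_S, the function f(k) = p_J·k + p_I·⌊1 + (n_S + n_Sc − k)/2⌋ over integers k with 0 ≤ k ≤ n_Sc − n_S − 1 is minimized at k = n_Sc − n_S − 1, with minimum value p_J·(n_Sc − n_S − 1) + p_I·(n_S + 1). -/
/-- Regime A (`p_J < p_I/2`): the attack cost
`f k = p_J * k + p_I * ⌊1 + (n_S + n_Sc - k)/2⌋` over `0 ≤ k ≤ n_Sc - n_S - 1`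
is minimized at `k = n_Sc - n_S - 1`, with value `p_J*(n_Sc-n_S-1) + p_I*(n_S+1)`. -/
theorem stmt0 (pJ pI : ℝ) (hJ : 0 ≤ pJ) (hJI : pJ < pI / 2)
    (nS nSc : ℕ) (h : nS < nSc)
    (f : ℕ → ℝ)
    (hf : ∀ k, f k = pJ * k + pI * (((nS + nSc - k) / 2 + 1 : ℕ) : ℝ)) :
    (∀ k, k ≤ nSc - nS - 1 → f (nSc - nS - 1) ≤ f k) ∧
    f (nSc - nS - 1) = pJ * ((nSc - nS - 1 : ℕ) : ℝ) + pI * ((nS : ℝ) + 1) := by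
  have hval : (nS + nSc - (nSc - nS - 1)) / 2 + 1 = nS + 1 := by omega
  have hfm : f (nSc - nS - 1) = pJ * ((nSc - nS - 1 : ℕ) : ℝ) + pI * ((nS : ℝ) + 1) := by
    rw [hf, hval]; push_cast; ring
  refine ⟨fun k hk => ?_, hfm⟩
  rw [hfm, hf]
  have h2 : 2 * ((nS + nSc - k) / 2 + 1) + k ≥ 2 * nS + 2 + (nSc - nS - 1) := by omega
  have h2' : (2 : ℝ) * (((nS + nSc - k) / 2 + 1 : ℕ) : ℝ) + k ≥
      2 * nS + 2 + ((nSc - nS - 1 : ℕ) : ℝ) := by exact_mod_cast h2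
  have hk' : ((k : ℝ)) ≤ ((nSc - nS - 1 : ℕ) : ℝ) := by exact_mod_cast hk
  nlinarith [mul_nonneg hJ (sub_nonneg.mpr hk'),
    mul_le_mul_of_nonneg_right (le_of_lt hJI) (sub_nonneg.mpr hk')]
end

section
/- For real costs p_J, p_I with p_I/2 ≤ p_J ≤ p_I, and a cut of total size m = n_S + n_Sc with n_Sc > n_S, the cost f(k) = p_J·k + p_I·⌊1 + (m − k)/2⌋ over 0 ≤ k ≤ n_Sc − n_S − 1 is minimized at k = 0 if m is odd and at k = 1 if m is even (when n_Sc − n_S − 1 ≥ 1), with minimum value p_J·(1 − (m mod 2)) + p_I·⌊(1 + m)/2⌋. -/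
/-- Regime B (`p_I/2 ≤ p_J ≤ p_I`): the attack cost
`f k = p_J * k + p_I * ⌊1 + (m - k)/2⌋` over `0 ≤ k ≤ n_Sc - n_S - 1`
is minimized at `k = 0` if `m` is odd and at `k = 1` if `m` is even
(when `n_Sc - n_S - 1 ≥ 1`), with minimum value
`p_J * (1 - m % 2) + p_I * ⌊(1 + m)/2⌋`. -/
theorem stmt1 (pJ pI : ℝ) (h1 : pI / 2 ≤ pJ) (h2 : pJ ≤ pI)
    (nS nSc m : ℕ) (h : nS < nSc) (hm : m = nS + nSc)
    (f : ℕ → ℝ)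
    (hf : ∀ k, f k = pJ * k + pI * (((m - k) / 2 + 1 : ℕ) : ℝ)) :
    (Odd m →
      (∀ k, k ≤ nSc - nS - 1 → f 0 ≤ f k) ∧
      f 0 = pJ * (1 - ((m % 2 : ℕ) : ℝ)) + pI * (((1 + m) / 2 : ℕ) : ℝ)) ∧
    (Even m → 1 ≤ nSc - nS - 1 →
      (∀ k, k ≤ nSc - nS - 1 → f 1 ≤ f k) ∧
      f 1 = pJ * (1 - ((m % 2 : ℕ) : ℝ)) + pI * (((1 + m) / 2 : ℕ) : ℝ)) := by
  have hpI : 0 ≤ pI := by linarith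
  have hpJ : 0 ≤ pJ := by linarith
  constructor
  · intro hodd
    obtain ⟨t, ht⟩ := hodd
    constructor
    · intro k hk
      rw [hf, hf]
      have hkm : k ≤ m := by omega
      set a := (m - 0) / 2 + 1 with ha
      set b := (m - k) / 2 + 1 with hb
      have hba : b ≤ a := by omega
      have hd : 2 * (a - b) ≤ k := by omega
      have c1 : ((a - b : ℕ) : ℝ) * 2 ≤ (k : ℝ) := by exact_mod_cast by omega
      have c2 : (a : ℝ) = (b : ℝ) + ((a - b : ℕ) : ℝ) := by
        have : a = b + (a - b) := by omega
        exact_mod_cast congrArg (Nat.cast : ℕ → ℝ) this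
      have hd0 : (0 : ℝ) ≤ ((a - b : ℕ) : ℝ) := Nat.cast_nonneg _
      push_cast at c1 c2 hd0 ⊢
      nlinarith [mul_le_mul_of_nonneg_right h1 hd0, mul_le_mul_of_nonneg_left c1 hpJ]
    · rw [hf]
      have e1 : (m - 0) / 2 + 1 = (1 + m) / 2 := by omega
      have e2 : m % 2 = 1 := by omega
      rw [e1, e2]
      push_cast
      ring
  · intro heven hrange
    obtain ⟨t, ht⟩ := heven
    have hm1 : 1 ≤ m := by omega
    constructor
    · intro k hk
      rcases Nat.eq_zero_or_pos k with hk0 | hk1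
      · subst hk0
        rw [hf, hf]
        have e : (m - 0) / 2 + 1 = ((m - 1) / 2 + 1) + 1 := by omega
        rw [e]
        push_cast
        nlinarith
      · rw [hf, hf]
        have hkm : k ≤ m := by omega
        set a := (m - 1) / 2 + 1 with ha
        set b := (m - k) / 2 + 1 with hb
        have hba : b ≤ a := by omega
        have hd : 2 * (a - b) ≤ k - 1 := by omega
        have c1 : ((a - b : ℕ) : ℝ) * 2 ≤ (k : ℝ) - 1 := by
          have : ((a - b) * 2 + 1 : ℕ) ≤ k := by omega
          have := (Nat.cast_le (α := ℝ)).2 this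
          push_cast at this
          linarith
        have c2 : (a : ℝ) = (b : ℝ) + ((a - b : ℕ) : ℝ) := by
          have : a = b + (a - b) := by omega
          exact_mod_cast congrArg (Nat.cast : ℕ → ℝ) this
        have hd0 : (0 : ℝ) ≤ ((a - b : ℕ) : ℝ) := Nat.cast_nonneg _
        push_cast at c1 c2 hd0 ⊢
        nlinarith [mul_le_mul_of_nonneg_right h1 hd0, mul_le_mul_of_nonneg_left c1 hpJ]
    · rw [hf]
      have e1 : (m - 1) / 2 + 1 = (1 + m) / 2 := by omega
      have e2 : m % 2 = 0 := by omega
      rw [e1, e2]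
      push_cast
      ring
end

section
/- Let C* be a feasible cut with n_S secure and n_Sc insecure edges (n_Sc > n_S), |C*| = n_S + n_Sc. If p_J < p_I/2 (with 0 ≤ p_J), then the difference between the no-jamming detectable attack cost p_I·⌊1 + |C*|/2⌋ and the jamming attack cost p_I·(n_S + 1) + p_J·(n_Sc − n_S − 1) equals (p_I − 2p_J)·⌊(n_Sc − n_S)/2⌋ + p_J·(1 − (|C*| mod 2)), and this quantity is nonnegative. -/
/-- For a feasible cut `C*` with `n_S` secure and `n_Sc` insecure edges, when
`0 ≤ p_J < p_I/2`, the saving of the jamming attack over the no-jamming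
detectable attack equals `(p_I - 2p_J)⌊(n_Sc-n_S)/2⌋ + p_J(1 - |C*| mod 2)`,
which is nonnegative. -/
theorem stmt5 (nS nSc : ℕ) (h : nS < nSc) (pJ pI : ℝ)
    (hI : 0 < pI) (hJ : 0 ≤ pJ) (hJI : pJ < pI / 2) :
    pI * (((nS + nSc) / 2 + 1 : ℕ) : ℝ) -
        (pI * ((nS : ℝ) + 1) + pJ * ((nSc - nS - 1 : ℕ) : ℝ)) =
      (pI - 2 * pJ) * (((nSc - nS) / 2 : ℕ) : ℝ) +
        pJ * (1 - (((nS + nSc) % 2 : ℕ) : ℝ)) ∧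
    0 ≤ (pI - 2 * pJ) * (((nSc - nS) / 2 : ℕ) : ℝ) +
        pJ * (1 - (((nS + nSc) % 2 : ℕ) : ℝ)) := by
  set d := nSc - nS with hdd
  have e1 : (nS + nSc) / 2 + 1 = nS + d / 2 + 1 := by omega
  have e2 : (nS + nSc) % 2 = d % 2 := by omega
  have e3 : nSc - nS - 1 = d - 1 := by omega
  have hsum : 2 * (d / 2) + d % 2 = d := by omega
  have hd1 : 1 ≤ d := by omega
  have hsumR : 2 * ((d / 2 : ℕ) : ℝ) + ((d % 2 : ℕ) : ℝ) = ((d : ℕ) : ℝ) := by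
    exact_mod_cast hsum
  have hdm1 : ((d - 1 : ℕ) : ℝ) = ((d : ℕ) : ℝ) - 1 := by
    push_cast [Nat.cast_sub hd1]; ring
  have hm : ((d % 2 : ℕ) : ℝ) ≤ 1 := by
    exact_mod_cast Nat.le_of_lt_succ (Nat.mod_lt d (by norm_num))
  rw [e1, e2, e3]
  constructor
  · push_cast
    rw [hdm1, ← hsumR]
    ring
  · have h1 : 0 ≤ (pI - 2 * pJ) * (((d / 2 : ℕ)) : ℝ) :=
      mul_nonneg (by linarith) (Nat.cast_nonneg _)
    have h2 : 0 ≤ pJ * (1 - ((d % 2 : ℕ) : ℝ)) :=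
      mul_nonneg hJ (by linarith)
    linarith
end

section
/- Both expressions g(m) = p_J·(1 − (m mod 2)) + p_I·⌊(1+m)/2⌋ are monotone nondecreasing in m ∈ ℕ whenever p_I/2 ≤ p_J ≤ p_I; hence the minimum over feasible cuts of the optimal attack cost in regime B is attained at a cut of minimum cardinality. -/
/-- In regime `p_I/2 ≤ p_J ≤ p_I`, the per-cut optimal cost
`g m = p_J (1 - m mod 2) + p_I ⌊(1+m)/2⌋` is monotone nondecreasing in `m`;
hence the optimum over feasible cuts is attained at a minimum-cardinality cut. -/
theorem stmt8 (pJ pI : ℝ) (hJ : 0 ≤ pJ) (h1 : pI / 2 ≤ pJ) (h2 : pJ ≤ pI)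
    (g : ℕ → ℝ)
    (hg : ∀ m, g m = pJ * (1 - ((m % 2 : ℕ) : ℝ)) + pI * (((1 + m) / 2 : ℕ) : ℝ)) :
    (∀ m, g m ≤ g (m + 1)) ∧ Monotone g := by
  have step : ∀ m, g m ≤ g (m + 1) := by
    intro m
    rw [hg, hg]
    rcases Nat.even_or_odd m with ⟨k, hk⟩ | ⟨k, hk⟩
    · subst hk
      have e1 : (k + k) % 2 = 0 := by omega
      have e2 : (k + k + 1) % 2 = 1 := by omega
      have e3 : (1 + (k + k)) / 2 = k := by omega
      have e4 : (1 + (k + k + 1)) / 2 = k + 1 := by omega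
      rw [e1, e2, e3, e4]
      push_cast
      nlinarith
    · subst hk
      have e1 : (2 * k + 1) % 2 = 1 := by omega
      have e2 : (2 * k + 1 + 1) % 2 = 0 := by omega
      have e3 : (1 + (2 * k + 1)) / 2 = k + 1 := by omega
      have e4 : (1 + (2 * k + 1 + 1)) / 2 = k + 1 := by omega
      rw [e1, e2, e3, e4]
      push_cast
      nlinarith
  exact ⟨step, monotone_nat_of_le_succ step⟩
end

section
/- Let G be a finite graph with edges labeled secure/insecure, and suppose the number of secure edges is at most ⌈|E|/2⌉ − 1 (strictly less than half). Then G is not completely resilient: a feasible detectable-jamming attack exists, given by the incidence cut of some vertex with a strict majority of insecure incident edges. Consequently, complete resilience against detectable attacks requires at least ⌈|E|/2⌉ secure measurements. -/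
/-- If the number of secure edges is at most `⌈|E|/2⌉ - 1` (strictly less than
half), then some vertex has a strict majority of insecure incident edges, so a
feasible detectable-jamming attack exists; consequently complete resilience
requires at least `⌈|E|/2⌉` secure measurements. -/
theorem stmt15 {V : Type*} [Fintype V] [DecidableEq V]
    (G : SimpleGraph V) [DecidableRel G.Adj]
    (secure : Finset (Sym2 V)) (hsec : secure ⊆ G.edgeFinset) :
    ((secure.card : ℤ) ≤ ⌈(G.edgeFinset.card : ℚ) / 2⌉ - 1 →
      ∃ v : V,
        2 * ((G.incidenceFinset v).filter (fun e => e ∈ secure)).card <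
          (G.incidenceFinset v).card) ∧
    ((∀ v : V,
        ¬ 2 * ((G.incidenceFinset v).filter (fun e => e ∈ secure)).card <
            (G.incidenceFinset v).card) →
      ⌈(G.edgeFinset.card : ℚ) / 2⌉ ≤ (secure.card : ℤ)) := by
  have hfe : ∀ v : V, (G.incidenceFinset v).filter (fun e => e ∈ secure)
      = secure.filter (fun e => v ∈ e) := by
    intro v
    ext e
    simp only [Finset.mem_filter, SimpleGraph.mem_incidenceFinset,
      SimpleGraph.incidenceSet, Set.mem_setOf_eq, Set.mem_sep_iff]
    constructor
    · rintro ⟨⟨_, hv⟩, hs⟩; exact ⟨hs, hv⟩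
    · rintro ⟨hs, hv⟩
      exact ⟨⟨(SimpleGraph.mem_edgeFinset.mp (hsec hs)), hv⟩, hs⟩
  have hsum : ∑ v : V, ((G.incidenceFinset v).filter (fun e => e ∈ secure)).card
      = 2 * secure.card := by
    have h2 : ∀ e ∈ secure, (Finset.univ.filter (fun v : V => v ∈ e)).card = 2 := by
      intro e he
      have hnd : ¬ e.IsDiag := by
        have := SimpleGraph.mem_edgeFinset.mp (hsec he)
        exact G.not_isDiag_of_mem_edgeSet this
      induction e with
      | _ a b =>
        have hab : a ≠ b := by simpa using hnd
        have : Finset.univ.filter (fun v : V => v ∈ s(a, b)) = {a, b} := by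
          ext v; simp [Sym2.mem_iff, or_comm]
        rw [this, Finset.card_insert_of_notMem (by simpa using hab),
          Finset.card_singleton]
    calc ∑ v : V, ((G.incidenceFinset v).filter (fun e => e ∈ secure)).card
        = ∑ v : V, ∑ e ∈ secure, if v ∈ e then 1 else 0 := by
          refine Finset.sum_congr rfl fun v _ => ?_
          rw [hfe v, Finset.card_filter]
      _ = ∑ e ∈ secure, ∑ v : V, if v ∈ e then 1 else 0 := Finset.sum_comm
      _ = ∑ e ∈ secure, (Finset.univ.filter (fun v : V => v ∈ e)).card := by
          refine Finset.sum_congr rfl fun e _ => ?_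
          rw [Finset.card_filter]
      _ = ∑ e ∈ secure, 2 := Finset.sum_congr rfl h2
      _ = 2 * secure.card := by rw [Finset.sum_const, smul_eq_mul, mul_comm]
  have hdeg : ∑ v : V, (G.incidenceFinset v).card = 2 * G.edgeFinset.card := by
    have : ∀ v : V, (G.incidenceFinset v).card = G.degree v := fun v =>
      G.card_incidenceFinset_eq_degree v
    simp only [this]
    exact G.sum_degrees_eq_twice_card_edges
  have key : ∀ (H : ∀ v : V,
      ¬ 2 * ((G.incidenceFinset v).filter (fun e => e ∈ secure)).card <
        (G.incidenceFinset v).card),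
      ⌈(G.edgeFinset.card : ℚ) / 2⌉ ≤ (secure.card : ℤ) := by
    intro H
    have hle : ∑ v : V, (G.incidenceFinset v).card
        ≤ ∑ v : V, 2 * ((G.incidenceFinset v).filter (fun e => e ∈ secure)).card :=
      Finset.sum_le_sum fun v _ => Nat.le_of_not_lt (H v)
    rw [hdeg, ← Finset.mul_sum, hsum] at hle
    have hE : G.edgeFinset.card ≤ 2 * secure.card := by omega
    rw [Int.ceil_le]
    have : (G.edgeFinset.card : ℚ) ≤ 2 * secure.card := by exact_mod_cast hE
    push_cast
    linarith
  refine ⟨?_, key⟩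
  intro hc
  by_contra h'
  push_neg at h'
  have := key fun v => Nat.not_lt.mpr (h' v)
  omega
end

section
/- In regime p_J < p_I/2, the cost saving of the optimal jamming attack over the no-jamming attack on the same cut, δ = p_I·⌊1 + (n_S + n_Sc)/2⌋ − p_I·(n_S + 1) − p_J·(n_Sc − n_S − 1), satisfies δ ≥ (p_I − 2p_J)·⌊(n_Sc − n_S)/2⌋ ≥ 0, with δ > 0 whenever n_Sc ≥ n_S + 2. -/
/-- In regime `0 ≤ p_J < p_I/2`, the saving `δ` of the optimal jamming attack
over the no-jamming attack on the same cut satisfies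
`δ ≥ (p_I - 2p_J)⌊(n_Sc - n_S)/2⌋ ≥ 0`, with `δ > 0` when `n_Sc ≥ n_S + 2`. -/
theorem stmt16 (nS nSc : ℕ) (h : nS < nSc) (pJ pI : ℝ)
    (hI : 0 < pI) (hJ : 0 ≤ pJ) (hJI : pJ < pI / 2)
    (δ : ℝ)
    (hδ : δ = pI * (((nS + nSc) / 2 + 1 : ℕ) : ℝ) -
      pI * ((nS : ℝ) + 1) - pJ * ((nSc - nS - 1 : ℕ) : ℝ)) :
    (pI - 2 * pJ) * (((nSc - nS) / 2 : ℕ) : ℝ) ≤ δ ∧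
    0 ≤ (pI - 2 * pJ) * (((nSc - nS) / 2 : ℕ) : ℝ) ∧
    (nS + 2 ≤ nSc → 0 < δ) := by
  obtain ⟨d, rfl⟩ : ∃ d, nSc = nS + d + 1 := ⟨nSc - nS - 1, by omega⟩
  set k : ℕ := (d + 1) / 2 with hk
  set r : ℕ := (d + 1) % 2 with hrdef
  have hd : d + 1 = 2 * k + r := by omega
  have hr : r ≤ 1 := by omega
  have h1 : (nS + (nS + d + 1)) / 2 + 1 = nS + 1 + k := by omega
  have h2 : nS + d + 1 - nS - 1 = d := by omega
  have h3 : (nS + d + 1 - nS) / 2 = k := by omega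
  rw [h1, h2] at hδ
  rw [h3]
  have hdR : (d : ℝ) = 2 * (k : ℝ) + (r : ℝ) - 1 := by
    have : ((d + 1 : ℕ) : ℝ) = ((2 * k + r : ℕ) : ℝ) := by exact_mod_cast congrArg (Nat.cast : ℕ → ℝ) hd
    push_cast at this; linarith
  have hrR : (r : ℝ) ≤ 1 := by exact_mod_cast hr
  have hδ' : δ = (pI - 2 * pJ) * k + pJ * (1 - r) := by
    rw [hδ]; push_cast; rw [hdR]; ring
  have hk0 : (0 : ℝ) ≤ k := Nat.cast_nonneg k
  refine ⟨by nlinarith, by nlinarith, fun hge => ?_⟩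
  have hk1 : 1 ≤ k := by omega
  have hk1R : (1 : ℝ) ≤ k := by exact_mod_cast hk1
  nlinarith
end
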